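/- Let s > 1, 0 < α < n/s, 0 < r ≤ s. For every quasi-everywhere defined u, ‖u‖_F ≤ D ‖u‖_{L^{s/r}(cap_{α,s})} for a constant D depending only on s, r (and n, α), where ‖u‖_F = inf{‖f‖_{L^s}^r : f ≥ 0, I_α f ≥ |u|^{1/r} q.e.}. The proof decomposes |u| = Σ_{i∈ℤ} |u| χ_{E_i} with E_i = {2^i ≤ |u| < 2^{i+1}}, takes near-optimal f_i for each piece, and uses f = sup_i f_i with f^s ≤ Σ_i f_i^s. -/

import Mathlib

open MeasureTheory ENNReal Set Filter

noncomputable section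

/-- Euclidean space ℝⁿ. -/
abbrev Rn (n : ℕ) := EuclideanSpace ℝ (Fin n)

/-- The normalizing constant γ(n,α) of the Riesz potential. -/
noncomputable def rieszConst (n : ℕ) (α : ℝ) : ℝ :=
  Real.Gamma (((n : ℝ) - α) / 2) / (Real.pi ^ ((n : ℝ) / 2) * 2 ^ α * Real.Gamma (α / 2))

/-- The Riesz potential I_α f(x) = γ(n,α) ∫ |x-y|^{α-n} f(y) dy of a nonnegative function. -/
noncomputable def rieszPotential (n : ℕ) (α : ℝ) (f : Rn n → ℝ≥0∞) (x : Rn n) : ℝ≥0∞ :=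
  ENNReal.ofReal (rieszConst n α) * ∫⁻ y, ENNReal.ofReal (‖x - y‖ ^ (α - (n : ℝ))) * f y

/-- The Riesz capacity cap_{α,s}(E) = inf{‖f‖_{L^s}^s : f ≥ 0, I_α f ≥ 1 on E}. -/
noncomputable def rieszCap (n : ℕ) (α s : ℝ) (E : Set (Rn n)) : ℝ≥0∞ :=
  ⨅ (f : Rn n → ℝ≥0∞) (_ : Measurable f ∧ ∀ x ∈ E, 1 ≤ rieszPotential n α f x),
    ∫⁻ y, f y ^ s

/-- The Choquet integral ∫ g dC = ∫₀^∞ C({g > t}) dt. -/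
noncomputable def choquet {n : ℕ} (C : Set (Rn n) → ℝ≥0∞) (g : Rn n → ℝ≥0∞) : ℝ≥0∞ :=
  ∫⁻ t in Set.Ioi (0 : ℝ), C {x | ENNReal.ofReal t < g x}

/-- The gauge ‖u‖_F = inf{‖f‖_{L^s}^r : f ≥ 0, I_α f ≥ |u|^{1/r} q.e.} (inf ∅ = ⊤). -/
noncomputable def Fgauge (n : ℕ) (α s r : ℝ) (u : Rn n → ℝ≥0∞) : ℝ≥0∞ :=
  ⨅ (f : Rn n → ℝ≥0∞)
    (_ : Measurable f ∧
      rieszCap n α s {x | rieszPotential n α f x < u x ^ (1 / r)} = 0),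
    (∫⁻ y, f y ^ s) ^ (r / s)

/-- The Wolff potential W_{α,s}μ(x) = ∫₀^∞ (μ(B_t(x))/t^{n-αs})^{1/(s-1)} dt/t. -/
noncomputable def wolff (n : ℕ) (α s : ℝ) (μ : Measure (Rn n)) (x : Rn n) : ℝ≥0∞ :=
  ∫⁻ t in Set.Ioi (0 : ℝ),
    (μ (Metric.ball x t) / ENNReal.ofReal (t ^ ((n : ℝ) - α * s))) ^ (1 / (s - 1)) /
      ENNReal.ofReal t

/-- The truncated Wolff potential W^R_{α,s}μ(x) = ∫₀^R (μ(B_t(x))/t^{n-αs})^{1/(s-1)} dt/t. -/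
noncomputable def wolffT (n : ℕ) (α s R : ℝ) (μ : Measure (Rn n)) (x : Rn n) : ℝ≥0∞ :=
  ∫⁻ t in Set.Ioc (0 : ℝ) R,
    (μ (Metric.ball x t) / ENNReal.ofReal (t ^ ((n : ℝ) - α * s))) ^ (1 / (s - 1)) /
      ENNReal.ofReal t

/-- The support of a measure: points all of whose balls have positive measure. -/
def measSupport {n : ℕ} (μ : Measure (Rn n)) : Set (Rn n) :=
  {x | ∀ r > 0, 0 < μ (Metric.ball x r)}

/-!
Split `u` into the dyadic layers `Eᵢ = {2^i ≤ u < 2^(i+1)}`. If `Fᵢ` is admissible for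
`cap(Eᵢ)`, then `f = (∑ᵢ (2^((i+1)/r) Fᵢ)^s)^(1/s)` dominates every `2^((i+1)/r) Fᵢ`, so
`I_α f ≥ u^(1/r)` off `{u = ∞}`, while `∫ f^s = ∑ᵢ 2^((i+1)s/r) ∫ Fᵢ^s`; choosing the `Fᵢ`
near-optimal gives `‖u‖_F^(s/r) ≤ ∑ᵢ 2^((i+1)s/r) cap(Eᵢ)`. For `t` in the interval
`[2^((i-1)s/r), 2^(is/r))` the superlevel set `{u^(s/r) > t}` contains `Eᵢ`; these intervals are
disjoint, which bounds the sum by a constant times the Choquet integral of `u^(s/r)`.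
-/

theorem le_tsum_mul_iInf₂_of_forall_le {ι β : Type*} [Countable ι] {P : ι → β → Prop}
    {φ : ι → β → ℝ≥0∞} {w : ι → ℝ≥0∞} (hw0 : ∀ i, w i ≠ 0) (hw : ∀ i, w i ≠ ⊤) {a : ℝ≥0∞}
    (h : ∀ F : ι → β, (∀ i, P i (F i)) → a ≤ ∑' i, w i * φ i (F i)) :
    a ≤ ∑' i, w i * ⨅ (b) (_ : P i b), φ i b := by
  refine ENNReal.le_of_forall_pos_le_add fun ε hε hfin => ?_
  obtain ⟨δ, hδ0, hδ⟩ := ENNReal.exists_pos_tsum_mul_lt_of_countable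
    (ENNReal.coe_ne_zero.2 hε.ne') w hw
  have hnear : ∀ i, ∃ b, P i b ∧ φ i b ≤ (⨅ (b) (_ : P i b), φ i b) + δ i := by
    intro i
    have hi : (⨅ (b) (_ : P i b), φ i b) ≠ ⊤ := fun htop =>
      ENNReal.ne_top_of_tsum_ne_top hfin.ne i (by rw [htop, ENNReal.mul_top (hw0 i)])
    obtain ⟨b, hb, hlt⟩ : ∃ b, ∃ _ : P i b, φ i b < (⨅ (b) (_ : P i b), φ i b) + δ i := by
      simpa only [iInf_lt_iff] using ENNReal.lt_add_right hi (ENNReal.coe_ne_zero.2 (hδ0 i).ne')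
    exact ⟨b, hb, hlt.le⟩
  choose F hP hF using hnear
  calc a ≤ ∑' i, w i * φ i (F i) := h F hP
    _ ≤ ∑' i, (w i * ⨅ (b) (_ : P i b), φ i b) + ∑' i, w i * δ i := by
      rw [← ENNReal.tsum_add]
      exact ENNReal.tsum_le_tsum fun i => (mul_le_mul_right (hF i) _).trans_eq (mul_add _ _ _)
    _ ≤ _ := add_le_add le_rfl hδ.le

theorem eq_zero_of_choquet_ne_top {n : ℕ} {C : Set (Rn n) → ℝ≥0∞} (hC : Monotone C)
    {g : Rn n → ℝ≥0∞} (h : choquet C g ≠ ⊤) : C {x | g x = ⊤} = 0 := by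
  by_contra h0
  refine h (top_le_iff.1 ?_)
  calc (⊤ : ℝ≥0∞) = ∫⁻ _ in Ioi (0 : ℝ), C {x | g x = ⊤} := by
        rw [setLIntegral_const, Real.volume_Ioi, ENNReal.mul_top h0]
    _ ≤ choquet C g := setLIntegral_mono' measurableSet_Ioi fun t _ =>
        hC fun x (hx : g x = ⊤) => by simp [hx]

def dyadicLayer {X : Type*} (u : X → ℝ≥0∞) (i : ℤ) : Set X :=
  {x | 2 ^ i ≤ u x ∧ u x < 2 ^ (i + 1)}

theorem exists_mem_dyadicLayer {X : Type*} {u : X → ℝ≥0∞} {x : X} (h0 : u x ≠ 0)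
    (htop : u x ≠ ⊤) : ∃ i, x ∈ dyadicLayer u i := by
  lift u x to NNReal using htop with v hv
  obtain ⟨i, hi⟩ := exists_mem_Ico_zpow (pos_iff_ne_zero.2 (by simpa using h0)) one_lt_two
  have hcoe : ∀ k : ℤ, (2 : ℝ≥0∞) ^ k = ((2 ^ k : NNReal) : ℝ≥0∞) := fun k => by
    rw [ENNReal.coe_zpow two_ne_zero, ENNReal.coe_ofNat]
  refine ⟨i, ?_⟩
  simp only [dyadicLayer, mem_ofPred_eq, ← hv, hcoe, ENNReal.coe_le_coe, ENNReal.coe_lt_coe]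
  exact hi

theorem two_zpow_rpow (i : ℤ) (a : ℝ) :
    ((2 : ℝ≥0∞) ^ i) ^ a = ENNReal.ofReal (((2 : ℝ) ^ a) ^ i) := by
  rw [← ENNReal.rpow_intCast, ← ENNReal.rpow_mul, ← Real.rpow_intCast, ← Real.rpow_mul zero_le_two,
    mul_comm, ← ENNReal.ofReal_rpow_of_pos two_pos, ENNReal.ofReal_ofNat]

theorem tsum_mul_dyadicLayer_le_choquet {n : ℕ} {C : Set (Rn n) → ℝ≥0∞} (hC : Monotone C)
    {a : ℝ} (ha : 0 < a) (u : Rn n → ℝ≥0∞) :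
    ∑' i : ℤ, ((2 : ℝ≥0∞) ^ (i + 1)) ^ a * C (dyadicLayer u i) ≤
      ENNReal.ofReal (((2 : ℝ) ^ a) ^ 2 / ((2 : ℝ) ^ a - 1)) * choquet C (fun x => u x ^ a) := by
  set b : ℝ := 2 ^ a
  have hb : 1 < b := Real.one_lt_rpow one_lt_two ha
  set K := ENNReal.ofReal (b ^ 2 / (b - 1))
  set g : ℝ → ℝ≥0∞ := fun t => C {x | ENNReal.ofReal t < u x ^ a}
  set J : ℤ → Set ℝ := fun i => Ico (b ^ (i - 1)) (b ^ i)
  have hJ_disj : Pairwise (Function.onFun Disjoint J) := by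
    simpa [J, Order.pred_eq_sub_one] using (zpow_right_mono₀ hb.le).pairwise_disjoint_on_Ico_pred
  have hJ_pos : ∀ i, J i ⊆ Ioi 0 := fun i t ht => (_root_.zpow_pos (by linarith) _).trans_le ht.1
  have hpiece : ∀ i : ℤ,
      ((2 : ℝ≥0∞) ^ (i + 1)) ^ a * C (dyadicLayer u i) ≤ K * ∫⁻ t in J i, g t := by
    intro i
    have hvol : ((2 : ℝ≥0∞) ^ (i + 1)) ^ a = K * volume (J i) := by
      have hb0 : b ≠ 0 := by positivity
      have e1 : b ^ (i + 1) = b ^ (i - 1) * b ^ 2 := by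
        rw [← zpow_natCast, ← zpow_add₀ hb0]; ring_nf
      have e2 : b ^ i = b ^ (i - 1) * b := by
        rw [← zpow_add_one₀ hb0]; ring_nf
      rw [two_zpow_rpow, Real.volume_Ico, ← ENNReal.ofReal_mul (by positivity), e1, e2]
      have : b - 1 ≠ 0 := by linarith
      field_simp
    have hsub : ∀ t ∈ J i, dyadicLayer u i ⊆ {x | ENNReal.ofReal t < u x ^ a} :=
      fun t ht x hx => calc
        ENNReal.ofReal t < ENNReal.ofReal (b ^ i) :=
          (ENNReal.ofReal_lt_ofReal_iff (_root_.zpow_pos (by linarith) _)).2 ht.2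
        _ = ((2 : ℝ≥0∞) ^ i) ^ a := (two_zpow_rpow i a).symm
        _ ≤ u x ^ a := ENNReal.rpow_le_rpow hx.1 ha.le
    calc _ = K * (C (dyadicLayer u i) * volume (J i)) := by rw [hvol]; ring
      _ = K * ∫⁻ t in J i, C (dyadicLayer u i) := by rw [setLIntegral_const]
      _ ≤ _ := mul_le_mul_right (setLIntegral_mono' measurableSet_Ico fun t ht => hC (hsub t ht)) K
  calc _ ≤ ∑' i : ℤ, K * ∫⁻ t in J i, g t := ENNReal.tsum_le_tsum hpiece
    _ = K * ∫⁻ t in ⋃ i, J i, g t := by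
      rw [ENNReal.tsum_mul_left, lintegral_iUnion (fun i => measurableSet_Ico) hJ_disj]
    _ ≤ K * choquet C (fun x => u x ^ a) :=
      mul_le_mul_right (lintegral_mono_set (iUnion_subset hJ_pos)) K

section Riesz

variable {n : ℕ} {α s r : ℝ}

theorem rieszCap_mono : Monotone (rieszCap n α s) :=
  fun _ _ h => le_iInf₂ fun f hf => iInf₂_le f ⟨hf.1, fun x hx => hf.2 x (h hx)⟩

theorem rieszPotential_mono {f g : Rn n → ℝ≥0∞} (h : f ≤ g) :
    rieszPotential n α f ≤ rieszPotential n α g :=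
  fun _ => mul_le_mul_right (lintegral_mono fun y => mul_le_mul_right (h y) _) _

theorem rieszPotential_const_mul {c : ℝ≥0∞} (hc : c ≠ ⊤) (f : Rn n → ℝ≥0∞) (x : Rn n) :
    rieszPotential n α (fun y => c * f y) x = c * rieszPotential n α f x := by
  simp only [rieszPotential, mul_left_comm _ c, lintegral_const_mul' c _ hc]

theorem Fgauge_rpow_le (hs : 0 < s) (hr : 0 < r) {u f : Rn n → ℝ≥0∞} (hf : Measurable f)
    (hfu : rieszCap n α s {x | rieszPotential n α f x < u x ^ (1 / r)} = 0) :
    Fgauge n α s r u ^ (s / r) ≤ ∫⁻ y, f y ^ s := by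
  have hle : Fgauge n α s r u ≤ (∫⁻ y, f y ^ s) ^ (r / s) := iInf₂_le f ⟨hf, hfu⟩
  have hexp : r / s * (s / r) = 1 := by field_simp
  simpa [← ENNReal.rpow_mul, hexp] using ENNReal.rpow_le_rpow hle (div_pos hs hr).le

theorem Fgauge_rpow_le_tsum_lintegral {ι : Type*} [Countable ι] (hs : 0 < s) (hr : 0 < r)
    {u : Rn n → ℝ≥0∞} {E : ι → Set (Rn n)} {c : ι → ℝ≥0∞} (hc : ∀ i, c i ≠ ⊤)
    (hcover : ∀ x, u x ≠ 0 → u x ≠ ⊤ → ∃ i, x ∈ E i ∧ u x ^ (1 / r) ≤ c i)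
    (htop : rieszCap n α s {x | u x = ⊤} = 0) {F : ι → Rn n → ℝ≥0∞}
    (hF : ∀ i, Measurable (F i)) (hFE : ∀ i, ∀ x ∈ E i, 1 ≤ rieszPotential n α (F i) x) :
    Fgauge n α s r u ^ (s / r) ≤ ∑' i, c i ^ s * ∫⁻ y, F i y ^ s := by
  set f : Rn n → ℝ≥0∞ := fun y => (∑' i, (c i * F i y) ^ s) ^ (1 / s)
  have hpiece_meas : ∀ i, Measurable fun y => (c i * F i y) ^ s :=
    fun i => ((hF i).const_mul (c i)).pow_const s
  have hf_meas : Measurable f := (Measurable.tsum hpiece_meas).pow_const _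
  have hf_pow : ∀ y, f y ^ s = ∑' i, (c i * F i y) ^ s := fun y => by
    simp only [f, ← ENNReal.rpow_mul, one_div_mul_cancel hs.ne', ENNReal.rpow_one]
  have hf_ge : ∀ i, (fun y => c i * F i y) ≤ f := fun i y => by
    rw [← ENNReal.rpow_le_rpow_iff hs, hf_pow]
    exact ENNReal.le_tsum i
  have hpot : ∀ i, ∀ x ∈ E i, c i ≤ rieszPotential n α f x := fun i x hx => calc
    c i ≤ c i * rieszPotential n α (F i) x := le_mul_of_one_le_right' (hFE i x hx)
    _ = rieszPotential n α (fun y => c i * F i y) x := (rieszPotential_const_mul (hc i) _ x).symm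
    _ ≤ rieszPotential n α f x := rieszPotential_mono (hf_ge i) x
  have hexc : {x | rieszPotential n α f x < u x ^ (1 / r)} ⊆ {x | u x = ⊤} := by
    intro x (hx : rieszPotential n α f x < u x ^ (1 / r))
    show u x = ⊤
    by_contra hne
    rcases eq_or_ne (u x) 0 with h0 | h0
    · rw [h0, ENNReal.zero_rpow_of_pos (one_div_pos.2 hr)] at hx
      exact ENNReal.not_lt_zero hx
    · obtain ⟨i, hi, hui⟩ := hcover x h0 hne
      exact (hx.trans_le (hui.trans (hpot i x hi))).false
  calc Fgauge n α s r u ^ (s / r) ≤ ∫⁻ y, f y ^ s :=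
        Fgauge_rpow_le hs hr hf_meas (le_antisymm (htop ▸ rieszCap_mono hexc) zero_le)
    _ = ∑' i, ∫⁻ y, (c i * F i y) ^ s := by
        simp_rw [hf_pow]
        exact lintegral_tsum fun i => (hpiece_meas i).aemeasurable
    _ = ∑' i, c i ^ s * ∫⁻ y, F i y ^ s := by
        refine tsum_congr fun i => ?_
        simp_rw [ENNReal.mul_rpow_of_nonneg _ _ hs.le]
        exact lintegral_const_mul' _ _ (ENNReal.rpow_ne_top_of_nonneg hs.le (hc i))

theorem Fgauge_rpow_le_tsum_rieszCap {ι : Type*} [Countable ι] (hs : 0 < s) (hr : 0 < r)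
    {u : Rn n → ℝ≥0∞} {E : ι → Set (Rn n)} {c : ι → ℝ≥0∞} (hc0 : ∀ i, c i ≠ 0)
    (hc : ∀ i, c i ≠ ⊤) (hcover : ∀ x, u x ≠ 0 → u x ≠ ⊤ → ∃ i, x ∈ E i ∧ u x ^ (1 / r) ≤ c i)
    (htop : rieszCap n α s {x | u x = ⊤} = 0) :
    Fgauge n α s r u ^ (s / r) ≤ ∑' i, c i ^ s * rieszCap n α s (E i) :=
  le_tsum_mul_iInf₂_of_forall_le
    (fun i => (ENNReal.rpow_pos (pos_iff_ne_zero.2 (hc0 i)) (hc i)).ne')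
    (fun i => ENNReal.rpow_ne_top_of_nonneg hs.le (hc i)) fun _ hF =>
    Fgauge_rpow_le_tsum_lintegral hs hr hc hcover htop (fun i => (hF i).1) fun i => (hF i).2

theorem Fgauge_rpow_le_tsum_dyadicLayer (hs : 0 < s) (hr : 0 < r) {u : Rn n → ℝ≥0∞}
    (htop : rieszCap n α s {x | u x = ⊤} = 0) :
    Fgauge n α s r u ^ (s / r) ≤
      ∑' i : ℤ, ((2 : ℝ≥0∞) ^ (i + 1)) ^ (s / r) * rieszCap n α s (dyadicLayer u i) := by
  have h2 : ∀ i : ℤ, 0 < (2 : ℝ≥0∞) ^ (i + 1) :=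
    fun i => ENNReal.zpow_pos two_ne_zero ofNat_ne_top _
  have h2' : ∀ i : ℤ, (2 : ℝ≥0∞) ^ (i + 1) ≠ ⊤ :=
    fun i => ENNReal.zpow_ne_top two_ne_zero ofNat_ne_top _
  have hcover : ∀ x, u x ≠ 0 → u x ≠ ⊤ →
      ∃ i, x ∈ dyadicLayer u i ∧ u x ^ (1 / r) ≤ ((2 : ℝ≥0∞) ^ (i + 1)) ^ (1 / r) := by
    intro x h0 hfin
    obtain ⟨i, hi⟩ := exists_mem_dyadicLayer h0 hfin
    exact ⟨i, hi, ENNReal.rpow_le_rpow hi.2.le (one_div_pos.2 hr).le⟩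
  simpa only [← ENNReal.rpow_mul, one_div_mul_eq_div] using
    Fgauge_rpow_le_tsum_rieszCap hs hr (fun i => (ENNReal.rpow_pos (h2 i) (h2' i)).ne')
      (fun i => ENNReal.rpow_ne_top_of_nonneg (one_div_pos.2 hr).le (h2' i)) hcover htop

end Riesz

theorem stmt11_general (n : ℕ) (α s r : ℝ) (hs : 1 < s) (hr : 0 < r) :
    ∃ D : ℝ≥0∞, D ≠ ⊤ ∧ ∀ u : Rn n → ℝ≥0∞,
      Fgauge n α s r u ≤
        D * choquet (rieszCap n α s) (fun x => u x ^ (s / r)) ^ (r / s) := by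
  have hs0 : 0 < s := one_pos.trans hs
  have hsr : 0 < s / r := div_pos hs0 hr
  have hrs : 0 < r / s := div_pos hr hs0
  set K := ENNReal.ofReal (((2 : ℝ) ^ (s / r)) ^ 2 / ((2 : ℝ) ^ (s / r) - 1))
  have hK : 0 < K := by
    have : 1 < (2 : ℝ) ^ (s / r) := Real.one_lt_rpow one_lt_two hsr
    exact ENNReal.ofReal_pos.2 (div_pos (by positivity) (by linarith))
  refine ⟨K ^ (r / s), ENNReal.rpow_ne_top_of_nonneg hrs.le ENNReal.ofReal_ne_top, fun u => ?_⟩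
  set ch := choquet (rieszCap n α s) (fun x => u x ^ (s / r))
  rcases eq_or_ne ch ⊤ with hch | hch
  · rw [hch, ENNReal.top_rpow_of_pos hrs,
      ENNReal.mul_top (ENNReal.rpow_pos_of_nonneg hK hrs.le).ne']
    exact le_top
  have htop : rieszCap n α s {x | u x = ⊤} = 0 := by
    simpa [ENNReal.rpow_eq_top_iff_of_pos hsr] using eq_zero_of_choquet_ne_top rieszCap_mono hch
  have hmain : Fgauge n α s r u ^ (s / r) ≤ K * ch :=
    (Fgauge_rpow_le_tsum_dyadicLayer hs0 hr htop).trans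
      (tsum_mul_dyadicLayer_le_choquet rieszCap_mono hsr u)
  calc Fgauge n α s r u = (Fgauge n α s r u ^ (s / r)) ^ (r / s) := by
        rw [← ENNReal.rpow_mul, div_mul_div_cancel₀ hr.ne', div_self hs0.ne', ENNReal.rpow_one]
    _ ≤ (K * ch) ^ (r / s) := ENNReal.rpow_le_rpow hmain hrs.le
    _ = K ^ (r / s) * ch ^ (r / s) := ENNReal.mul_rpow_of_nonneg _ _ hrs.le

/-- ‖u‖_F ≤ D ‖u‖_{L^{s/r}(cap_{α,s})}. -/
theorem stmt11 (n : ℕ) (α s r : ℝ) (hs : 1 < s) (hα : 0 < α) (hαn : α < n / s)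
    (hr : 0 < r) (hrs : r ≤ s) :
    ∃ D : ℝ≥0∞, D ≠ ⊤ ∧ ∀ u : Rn n → ℝ≥0∞,
      Fgauge n α s r u ≤
        D * choquet (rieszCap n α s) (fun x => u x ^ (s / r)) ^ (r / s) :=
  stmt11_general n α s r hs hr
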